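/- A finite form of Lebesgue's identity: for every nonnegative integer n, ∑_{k=0}^n [n choose k]_q · q^{k(k+1)/2} / (a q^k; q)_{n+1} = (−q;q)_n / (a;q²)_{n+1}. -/

import Mathlib

/-- The q-shifted factorial `(x;q)_n`. -/
def qPoch {K : Type*} [Field K] (q x : K) (n : ℕ) : K :=
  ∏ j ∈ Finset.range n, (1 - x * q ^ j)

/-- The Gaussian binomial coefficient `[n choose k]_q`, zero for `k > n`. -/
def qBinom {K : Type*} [Field K] (q : K) (n k : ℕ) : K :=
  if k ≤ n then qPoch q q n / (qPoch q q k * qPoch q q (n - k)) else 0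

/-
Both sides satisfy `X (n + 1) = (1 + q ^ (n + 1)) / (1 - a q ^ (2n + 2)) * X n`. For the left-hand
side this holds termwise only up to a telescoping difference `G k - G (k + 1)` (a q-Zeilberger
certificate), where
`G k = q ^ (n + 1) q ^ ((k - 1) k / 2) [n, k - 1] / ((1 - a q ^ (2n + 2)) (a q ^ k; q)_{n+1})`
vanishes at `k = 0` and at `k = n + 2`. Once `[n, k]` and `[n, k - 1]` are expressed through
`[n + 1, k]`, the termwise identity is a rational identity in `a`, `q ^ k` and `q ^ (n + 1 - k)`.
-/

section

variable {K : Type*} [Field K]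

theorem qPoch_succ (q x : K) (n : ℕ) : qPoch q x (n + 1) = qPoch q x n * (1 - x * q ^ n) :=
  Finset.prod_range_succ _ _

theorem qPoch_succ' (q x : K) (n : ℕ) : qPoch q x (n + 1) = (1 - x) * qPoch q (x * q) n := by
  rw [qPoch, Finset.prod_range_succ', pow_zero, mul_one, mul_comm, qPoch]
  simp only [pow_succ', mul_assoc]

theorem qPoch_self_succ (q : K) (n : ℕ) :
    qPoch q q (n + 1) = qPoch q q n * (1 - q ^ (n + 1)) := by
  rw [qPoch_succ, pow_succ']

theorem qPoch_ne_zero {q x : K} {n : ℕ} (h : ∀ j < n, 1 - x * q ^ j ≠ 0) :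
    qPoch q x n ≠ 0 :=
  Finset.prod_ne_zero_iff.2 fun j hj => h j (Finset.mem_range.1 hj)

theorem qPoch_ne_zero_of_le {q x : K} {m n : ℕ} (h : qPoch q x n ≠ 0) (hmn : m ≤ n) :
    qPoch q x m ≠ 0 :=
  Finset.prod_ne_zero_iff.2 fun j hj =>
    Finset.prod_ne_zero_iff.1 h j (Finset.mem_range.2 ((Finset.mem_range.1 hj).trans_le hmn))

theorem one_sub_pow_ne_zero_of_qPoch {q : K} {n i : ℕ} (h : qPoch q q n ≠ 0) (hi : 1 ≤ i)
    (hin : i ≤ n) :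
    1 - q ^ i ≠ 0 := by
  obtain ⟨j, rfl⟩ := Nat.exists_eq_add_of_le' hi
  have h' := qPoch_ne_zero_of_le h hin
  rw [qPoch_self_succ] at h'
  exact right_ne_zero_of_mul h'

theorem qBinom_of_lt {q : K} {n k : ℕ} (h : n < k) : qBinom q n k = 0 :=
  if_neg (not_le.2 h)

theorem qBinom_succ_mul_one_sub_pow {q : K} {n : ℕ} (h : qPoch q q n ≠ 0) (k : ℕ) :
    qBinom q n (k + 1) * (1 - q ^ (k + 1)) = qBinom q n k * (1 - q ^ (n - k)) := by
  rcases Nat.lt_or_ge k n with hk | hk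
  · obtain ⟨m, rfl⟩ : ∃ m, n = k + 1 + m := ⟨n - (k + 1), by omega⟩
    have hk₁ := one_sub_pow_ne_zero_of_qPoch h (Nat.le_add_left 1 k) (by omega)
    have hm₁ := one_sub_pow_ne_zero_of_qPoch h (Nat.le_add_left 1 m) (by omega)
    have hk₀ := qPoch_ne_zero_of_le h (by omega : k ≤ k + 1 + m)
    have hm₀ := qPoch_ne_zero_of_le h (by omega : m ≤ k + 1 + m)
    rw [qBinom, qBinom, if_pos (by omega), if_pos (by omega), show k + 1 + m - (k + 1) = m by omega,
      show k + 1 + m - k = m + 1 by omega, qPoch_self_succ q k, qPoch_self_succ q m]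
    field_simp
  · simp [qBinom_of_lt (Nat.lt_succ_of_le hk), Nat.sub_eq_zero_of_le hk]

theorem qBinom_mul_one_sub_pow_succ {q : K} {n : ℕ} (h : qPoch q q (n + 1) ≠ 0) (k : ℕ) :
    qBinom q n k * (1 - q ^ (n + 1)) = qBinom q (n + 1) k * (1 - q ^ (n + 1 - k)) := by
  rcases Nat.lt_or_ge n k with hk | hk
  · simp [qBinom_of_lt hk, Nat.sub_eq_zero_of_le hk]
  · obtain ⟨m, rfl⟩ := Nat.exists_eq_add_of_le hk
    have hm₁ := one_sub_pow_ne_zero_of_qPoch h (Nat.le_add_left 1 m) (by omega)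
    have hk₀ := qPoch_ne_zero_of_le h (by omega : k ≤ k + m + 1)
    have hm₀ := qPoch_ne_zero_of_le h (by omega : m ≤ k + m + 1)
    rw [qBinom, qBinom, if_pos hk, if_pos (by omega), show k + m + 1 - k = m + 1 by omega,
      Nat.add_sub_cancel_left, qPoch_self_succ q (k + m), qPoch_self_succ q m]
    field_simp

def lebesgueTerm (q a : K) (n k : ℕ) : K :=
  qBinom q n k * q ^ (k * (k + 1) / 2) / qPoch q (a * q ^ k) (n + 1)

-- `(1 - q ^ k) [n + 1, k] / (1 - q ^ (n + 1))` is `[n, k - 1]`, written so as to vanish at `k = 0`.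
def lebesgueCertificate (q a : K) (n k : ℕ) : K :=
  q ^ (n + 1) * q ^ ((k - 1) * k / 2) * ((1 - q ^ k) * qBinom q (n + 1) k) /
    ((1 - q ^ (n + 1)) * (1 - a * q ^ (2 * n + 2)) * qPoch q (a * q ^ k) (n + 1))

theorem pow_mul_succ_div_two (q : K) (k : ℕ) :
    q ^ (k * (k + 1) / 2) = q ^ ((k - 1) * k / 2) * q ^ k := by
  rw [← pow_add]
  congr 1
  rcases k with _ | k
  · rfl
  · rw [Nat.add_sub_cancel, show (k + 1) * (k + 1 + 1) = k * (k + 1) + (k + 1) * 2 by ring,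
      Nat.add_mul_div_right _ _ two_pos]

theorem lebesgueTerm_succ {q a : K} {n k : ℕ} (hqq : qPoch q q (n + 1) ≠ 0)
    (ha : ∀ j : ℕ, 1 - a * q ^ j ≠ 0) (hk : k ≤ n + 1) :
    lebesgueTerm q a (n + 1) k =
      (1 + q ^ (n + 1)) / (1 - a * q ^ (2 * n + 2)) * lebesgueTerm q a n k +
        (lebesgueCertificate q a n k - lebesgueCertificate q a n (k + 1)) := by
  have hbinom := qBinom_mul_one_sub_pow_succ hqq k
  have hbinom_succ := qBinom_succ_mul_one_sub_pow hqq k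
  have hN : q ^ (n + 1) = q ^ k * q ^ (n + 1 - k) := by rw [← pow_add, Nat.add_sub_cancel' hk]
  have hpoch : qPoch q (a * q ^ k) (n + 1) = (1 - a * q ^ k) * qPoch q (a * q ^ (k + 1)) n := by
    rw [qPoch_succ', pow_succ, mul_assoc]
  have hpoch_shift_succ : qPoch q (a * q ^ (k + 1)) (n + 1) =
      qPoch q (a * q ^ (k + 1)) n * (1 - a * q ^ k * q ^ (n + 1)) := by
    rw [qPoch_succ]; ring
  have hpoch_succ_succ : qPoch q (a * q ^ k) (n + 1 + 1) =
      (1 - a * q ^ k) * (qPoch q (a * q ^ (k + 1)) n * (1 - a * q ^ k * q ^ (n + 1))) := by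
    rw [qPoch_succ', mul_assoc, ← pow_succ, hpoch_shift_succ]
  have hu : 1 - a * q ^ k ≠ 0 := ha k
  have hE : 1 - a * q ^ k * q ^ (n + 1) ≠ 0 := by rw [mul_assoc, ← pow_add]; exact ha _
  have hD : 1 - a * q ^ (2 * n + 2) ≠ 0 := ha _
  have hQ : qPoch q (a * q ^ (k + 1)) n ≠ 0 :=
    qPoch_ne_zero fun j _ => by rw [mul_assoc, ← pow_add]; exact ha _
  have hN₀ : 1 - q ^ (n + 1) ≠ 0 :=
    one_sub_pow_ne_zero_of_qPoch hqq (Nat.le_add_left 1 n) le_rfl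
  unfold lebesgueTerm lebesgueCertificate
  rw [show q ^ (2 * n + 2) = (q ^ (n + 1)) ^ 2 by ring] at hD ⊢
  rw [eq_div_of_mul_eq hN₀ hbinom, Nat.add_sub_cancel, pow_mul_succ_div_two q k, hpoch, hpoch_shift_succ, hpoch_succ_succ,
    mul_comm (1 - q ^ (k + 1)), hbinom_succ]
  rw [hN] at hD hE hN₀ ⊢
  generalize q ^ k = u, q ^ (n + 1 - k) = w, q ^ ((k - 1) * k / 2) = t,
    qBinom q (n + 1) k = A, qPoch q (a * q ^ (k + 1)) n = Q at *
  simp only [div_mul_eq_mul_div, mul_div_assoc', div_div]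
  rw [div_sub_div _ _ (by simp [*]) (by simp [*]), div_add_div _ _ (by simp [*]) (by simp [*]),
    div_eq_div_iff (by simp [*]) (by simp [*])]
  ring

theorem sum_lebesgueTerm_succ {q a : K} {n : ℕ} (hqq : qPoch q q (n + 1) ≠ 0)
    (ha : ∀ j : ℕ, 1 - a * q ^ j ≠ 0) :
    ∑ k ∈ Finset.range (n + 2), lebesgueTerm q a (n + 1) k =
      (1 + q ^ (n + 1)) / (1 - a * q ^ (2 * n + 2)) *
        ∑ k ∈ Finset.range (n + 1), lebesgueTerm q a n k := by
  have h₀ : lebesgueCertificate q a n 0 = 0 := by simp [lebesgueCertificate]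
  have hlast : lebesgueCertificate q a n (n + 2) = 0 := by
    simp [lebesgueCertificate, qBinom_of_lt (Nat.lt_succ_self (n + 1))]
  have hzero : lebesgueTerm q a n (n + 1) = 0 := by
    simp [lebesgueTerm, qBinom_of_lt (Nat.lt_succ_self n)]
  rw [Finset.sum_congr rfl fun k hk =>
      lebesgueTerm_succ hqq ha (Nat.lt_succ_iff.1 (Finset.mem_range.1 hk)),
    Finset.sum_add_distrib, ← Finset.mul_sum, Finset.sum_range_sub', h₀, hlast,
    Finset.sum_range_succ _ (n + 1), hzero, sub_zero, add_zero, add_zero]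

end

theorem finite_lebesgue_general {K : Type*} [Field K] (q a : K) (n : ℕ)
    (hqq : qPoch q q n ≠ 0)
    (ha : ∀ j : ℕ, 1 - a * q ^ j ≠ 0) :
    ∑ k ∈ Finset.range (n + 1),
      qBinom q n k * q ^ (k * (k + 1) / 2) / qPoch q (a * q ^ k) (n + 1)
    = qPoch q (-q) n / qPoch (q ^ 2) a (n + 1) := by
  induction n with
  | zero => simp [qBinom, qPoch]
  | succ n ih =>
    have hrec := sum_lebesgueTerm_succ hqq ha
    unfold lebesgueTerm at hrec
    have hD : 1 - a * q ^ (2 * n + 2) ≠ 0 := ha _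
    have hD' : 1 - a * (q ^ 2) ^ (n + 1) ≠ 0 := by rw [← pow_mul]; exact ha _
    have hR : qPoch (q ^ 2) a (n + 1) ≠ 0 :=
      qPoch_ne_zero fun j _ => by rw [← pow_mul]; exact ha _
    rw [hrec, ih (qPoch_ne_zero_of_le hqq n.le_succ), qPoch_succ q (-q),
      qPoch_succ (q ^ 2) a (n + 1)]
    field_simp
    ring

/-- A finite form of Lebesgue's identity (and of Jacobi's triple product identity). -/
theorem finite_lebesgue {K : Type*} [Field K] (q a : K) (n : ℕ)
    (hq : q ≠ 0) (hqq : qPoch q q n ≠ 0)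
    (ha : ∀ j : ℕ, 1 - a * q ^ j ≠ 0) :
    ∑ k ∈ Finset.range (n + 1),
      qBinom q n k * q ^ (k * (k + 1) / 2) / qPoch q (a * q ^ k) (n + 1)
    = qPoch q (-q) n / qPoch (q ^ 2) a (n + 1) :=
  finite_lebesgue_general q a n hqq ha
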